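/- Let $\phi_k, \ldots, \phi_{N-1} \in \mathbb{R}^d$ with $\|\phi_j\| \le 1$, let $\Phi(N,k) = (I - \phi_{N-1}\phi_{N-1}^\top) \cdots (I - \phi_k \phi_k^\top)$, let $\mu_j \ge 0$ be weights, set $S_{Nk} = \sum_{j=k}^{N-1} \mu_j \phi_j \phi_j^\top$ and $B_{jk} = \sum_{l=k}^{j-1}(\phi_j^\top \phi_l)^2$. Then $\|\Phi(N,k)\|^2 \le 1 - \lambda_{\min}(S_{Nk}) / \big(\sqrt{\max_{k \le j < N} \mu_j} + \sqrt{\sum_{j=k}^{N-1} \mu_j B_{jk}}\big)^2$, provided the denominator is positive. -/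

import Mathlib

/-!
Follow `x` through the factors: `y k = x` and `y (j + 1) = y j - a j • φ j` with
`a j = ⟪φ j, y j⟫`. Since `‖φ j‖ ≤ 1`, each step removes at least `a j ^ 2` from `‖y j‖ ^ 2`, so
`‖Φ(N,k) x‖² ≤ ‖x‖² - s` with `s = ∑ a j ^ 2`. Telescoping the same recursion gives
`⟪φ j, x⟫ = a j + ∑_{l<j} a l ⟪φ j, φ l⟫`, hence `|⟪φ j, x⟫| ≤ |a j| + √(B_{jk} s)` by
Cauchy–Schwarz, and a weighted Minkowski inequality turns
`λ_min ‖x‖² ≤ ⟪x, S x⟫ = ∑ μ j ⟪φ j, x⟫²` into `λ_min ‖x‖² ≤ denom² s`.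
Eliminating `s` between the two bounds gives the theorem.
-/

open Finset Matrix
open scoped RealInnerProductSpace

section MatrixFacts

variable {n : Type*} [Fintype n] [DecidableEq n]

theorem Matrix.toEuclideanLin_vecMulVec_self_apply (u z : EuclideanSpace ℝ n) :
    toEuclideanLin (vecMulVec (WithLp.ofLp u) (WithLp.ofLp u)) z = ⟪u, z⟫ • u := by
  ext i
  simp only [toLpLin_apply, PiLp.toLp_apply, PiLp.smul_apply, smul_eq_mul, PiLp.inner_apply,
    RCLike.inner_apply, conj_trivial, mulVec, dotProduct, vecMulVec_apply, Finset.sum_mul]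
  exact Finset.sum_congr rfl fun j _ => by ring

theorem Matrix.toEuclideanLin_one_sub_vecMulVec_self_apply (u z : EuclideanSpace ℝ n) :
    toEuclideanLin (1 - vecMulVec (WithLp.ofLp u) (WithLp.ofLp u)) z = z - ⟪u, z⟫ • u := by
  rw [map_sub, LinearMap.sub_apply, toLpLin_one, LinearMap.id_apply,
    toEuclideanLin_vecMulVec_self_apply]

theorem Matrix.inner_toEuclideanLin_vecMulVec_self (u x : EuclideanSpace ℝ n) :
    ⟪x, toEuclideanLin (vecMulVec (WithLp.ofLp u) (WithLp.ofLp u)) x⟫ = ⟪u, x⟫ ^ 2 := by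
  rw [toEuclideanLin_vecMulVec_self_apply, real_inner_smul_right, real_inner_comm, sq]

theorem Matrix.IsHermitian.iInf_eigenvalues_mul_norm_sq_le {A : Matrix n n ℝ}
    (hA : A.IsHermitian) (x : EuclideanSpace ℝ n) :
    (⨅ i, hA.eigenvalues i) * ‖x‖ ^ 2 ≤ ⟪x, toEuclideanLin A x⟫ := by
  set b := hA.eigenvectorBasis
  have hb : ∀ i, toEuclideanLin A (b i) = hA.eigenvalues i • b i := fun i =>
    congrArg (WithLp.toLp 2) (hA.mulVec_eigenvectorBasis i)
  have hsymm : (toEuclideanLin A).IsSymmetric := isSymmetric_toEuclideanLin_iff.mpr hA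
  have hquad : ⟪x, toEuclideanLin A x⟫ = ∑ i, hA.eigenvalues i * ⟪b i, x⟫ ^ 2 := by
    rw [← b.sum_inner_mul_inner]
    refine Finset.sum_congr rfl fun i _ => ?_
    rw [← hsymm, hb, real_inner_smul_left, real_inner_comm x]
    ring
  rw [hquad, ← b.sum_sq_inner_right, Finset.mul_sum]
  gcongr with i
  exact ciInf_le (Set.finite_range _).bddBelow i

end MatrixFacts

theorem ContinuousLinearMap.opNorm_sq_le_of_forall_norm_sq_le {E F : Type*}
    [NormedAddCommGroup E] [NormedSpace ℝ E] [Nontrivial E] [NormedAddCommGroup F] [NormedSpace ℝ F]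
    (T : E →L[ℝ] F) {C : ℝ} (h : ∀ x, ‖T x‖ ^ 2 ≤ C * ‖x‖ ^ 2) : ‖T‖ ^ 2 ≤ C := by
  have hC : 0 ≤ C := by
    obtain ⟨x, hx⟩ := exists_ne (0 : E)
    exact nonneg_of_mul_nonneg_left ((sq_nonneg _).trans (h x)) (by positivity)
  have hT : ‖T‖ ≤ √C := T.opNorm_le_bound (Real.sqrt_nonneg C) fun x => by
    rw [← Real.sqrt_sq (norm_nonneg (T x)), ← Real.sqrt_sq (norm_nonneg x), ← Real.sqrt_mul hC]
    exact Real.sqrt_le_sqrt (h x)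
  calc ‖T‖ ^ 2 ≤ √C ^ 2 := pow_le_pow_left₀ (norm_nonneg T) hT 2
    _ = C := Real.sq_sqrt hC

theorem Real.abs_sum_mul_le_sqrt_mul_sqrt {ι : Type*} (s : Finset ι) (f g : ι → ℝ) :
    |∑ i ∈ s, f i * g i| ≤ √(∑ i ∈ s, f i ^ 2) * √(∑ i ∈ s, g i ^ 2) := by
  rw [← Real.sqrt_mul (sum_nonneg fun i _ => sq_nonneg (f i))]
  exact Real.abs_le_sqrt (sum_mul_sq_le_sq_mul_sq s f g)

theorem Finset.sum_mul_add_sq_le_sqrt_add_sqrt_sq {ι : Type*} (s : Finset ι) {w : ι → ℝ}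
    (hw : ∀ i ∈ s, 0 ≤ w i) (b c : ι → ℝ) :
    ∑ i ∈ s, w i * (b i + c i) ^ 2 ≤
      (√(∑ i ∈ s, w i * b i ^ 2) + √(∑ i ∈ s, w i * c i ^ 2)) ^ 2 := by
  have hsq : ∀ i ∈ s, ∀ f : ι → ℝ, (√(w i) * f i) ^ 2 = w i * f i ^ 2 := fun i hi f => by
    rw [mul_pow, Real.sq_sqrt (hw i hi)]
  have hcross : ∑ i ∈ s, w i * (b i * c i) ≤
      √(∑ i ∈ s, w i * b i ^ 2) * √(∑ i ∈ s, w i * c i ^ 2) := by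
    have := Real.sum_mul_le_sqrt_mul_sqrt s (fun i => √(w i) * b i) (fun i => √(w i) * c i)
    rwa [Finset.sum_congr rfl fun i hi => hsq i hi b, Finset.sum_congr rfl fun i hi => hsq i hi c,
      Finset.sum_congr rfl fun i hi => by
        rw [mul_mul_mul_comm, Real.mul_self_sqrt (hw i hi)]] at this
  have hP : 0 ≤ ∑ i ∈ s, w i * b i ^ 2 := sum_nonneg fun i hi => by have := hw i hi; positivity
  have hQ : 0 ≤ ∑ i ∈ s, w i * c i ^ 2 := sum_nonneg fun i hi => by have := hw i hi; positivity
  have hexpand : ∑ i ∈ s, w i * (b i + c i) ^ 2 = ∑ i ∈ s, w i * b i ^ 2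
      + 2 * ∑ i ∈ s, w i * (b i * c i) + ∑ i ∈ s, w i * c i ^ 2 := by
    rw [Finset.mul_sum, ← sum_add_distrib, ← sum_add_distrib]
    exact sum_congr rfl fun i _ => by ring
  rw [hexpand, add_sq, Real.sq_sqrt hP, Real.sq_sqrt hQ]
  linarith

section Deflation

variable {E : Type*} [NormedAddCommGroup E] [InnerProductSpace ℝ E]

theorem norm_sub_inner_smul_sq_le {u : E} (hu : ‖u‖ ≤ 1) (z : E) :
    ‖z - ⟪u, z⟫ • u‖ ^ 2 ≤ ‖z‖ ^ 2 - ⟪u, z⟫ ^ 2 := by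
  have hu2 : ‖u‖ ^ 2 ≤ 1 := pow_le_one₀ (norm_nonneg u) hu
  rw [norm_sub_sq_real, real_inner_smul_right, real_inner_comm, norm_smul, mul_pow,
    Real.norm_eq_abs, sq_abs]
  nlinarith [sq_nonneg ⟪u, z⟫]

variable {φ y : ℕ → E} {k : ℕ}

theorem norm_sq_add_sum_inner_sq_le (hφ : ∀ j, ‖φ j‖ ≤ 1)
    (hy : ∀ n, k ≤ n → y (n + 1) = y n - ⟪φ n, y n⟫ • φ n) {n : ℕ} (hn : k ≤ n) :
    ‖y n‖ ^ 2 + ∑ j ∈ Ico k n, ⟪φ j, y j⟫ ^ 2 ≤ ‖y k‖ ^ 2 := by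
  induction n, hn using Nat.le_induction with
  | base => simp
  | succ n hn ih =>
    have := norm_sub_inner_smul_sq_le (hφ n) (y n)
    rw [sum_Ico_succ_top hn, hy n hn]
    linarith

theorem inner_eq_inner_add_sum_inner_mul_inner
    (hy : ∀ n, k ≤ n → y (n + 1) = y n - ⟪φ n, y n⟫ • φ n) (v : E) {n : ℕ} (hn : k ≤ n) :
    ⟪v, y k⟫ = ⟪v, y n⟫ + ∑ l ∈ Ico k n, ⟪φ l, y l⟫ * ⟪v, φ l⟫ := by
  induction n, hn using Nat.le_induction with
  | base => simp
  | succ n hn ih =>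
    rw [sum_Ico_succ_top hn, hy n hn, inner_sub_right, real_inner_smul_right, ih]
    ring

theorem abs_inner_le_abs_inner_add_sqrt_mul_sqrt
    (hy : ∀ n, k ≤ n → y (n + 1) = y n - ⟪φ n, y n⟫ • φ n) {j N : ℕ} (hkj : k ≤ j) (hjN : j ≤ N) :
    |⟪φ j, y k⟫| ≤ |⟪φ j, y j⟫| +
      √(∑ l ∈ Ico k j, ⟪φ j, φ l⟫ ^ 2) * √(∑ l ∈ Ico k N, ⟪φ l, y l⟫ ^ 2) := by
  have hpartial : √(∑ l ∈ Ico k j, ⟪φ l, y l⟫ ^ 2) ≤ √(∑ l ∈ Ico k N, ⟪φ l, y l⟫ ^ 2) :=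
    Real.sqrt_le_sqrt <| sum_le_sum_of_subset_of_nonneg (Ico_subset_Ico_right hjN)
      fun l _ _ => sq_nonneg _
  have hcs := Real.abs_sum_mul_le_sqrt_mul_sqrt (Ico k j) (fun l => ⟪φ l, y l⟫) (fun l => ⟪φ j, φ l⟫)
  rw [inner_eq_inner_add_sum_inner_mul_inner hy (φ j) hkj]
  calc _ ≤ |⟪φ j, y j⟫| + |∑ l ∈ Ico k j, ⟪φ l, y l⟫ * ⟪φ j, φ l⟫| := abs_add_le _ _
    _ ≤ _ := by
      rw [mul_comm (√_)]
      gcongr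
      exact hcs.trans (mul_le_mul_of_nonneg_right hpartial (Real.sqrt_nonneg _))

theorem sum_mul_inner_sq_le {μ : ℕ → ℝ} (hμ : ∀ j, 0 ≤ μ j)
    (hy : ∀ n, k ≤ n → y (n + 1) = y n - ⟪φ n, y n⟫ • φ n) {N : ℕ} (hkN : (Ico k N).Nonempty) :
    ∑ j ∈ Ico k N, μ j * ⟪φ j, y k⟫ ^ 2 ≤
      (√((Ico k N).sup' hkN μ) + √(∑ j ∈ Ico k N, μ j * ∑ l ∈ Ico k j, ⟪φ j, φ l⟫ ^ 2)) ^ 2 *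
        ∑ j ∈ Ico k N, ⟪φ j, y j⟫ ^ 2 := by
  set s := ∑ j ∈ Ico k N, ⟪φ j, y j⟫ ^ 2
  set B : ℕ → ℝ := fun j => ∑ l ∈ Ico k j, ⟪φ j, φ l⟫ ^ 2
  have hs : 0 ≤ s := sum_nonneg fun j _ => sq_nonneg _
  have hB : ∀ j, 0 ≤ B j := fun j => sum_nonneg fun l _ => sq_nonneg _
  have hmax : ∑ j ∈ Ico k N, μ j * |⟪φ j, y j⟫| ^ 2 ≤ (Ico k N).sup' hkN μ * s := by
    rw [Finset.mul_sum]
    refine sum_le_sum fun j hj => ?_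
    rw [sq_abs]
    exact mul_le_mul_of_nonneg_right (le_sup' μ hj) (sq_nonneg _)
  calc ∑ j ∈ Ico k N, μ j * ⟪φ j, y k⟫ ^ 2
      ≤ ∑ j ∈ Ico k N, μ j * (|⟪φ j, y j⟫| + √(B j) * √s) ^ 2 := by
        refine sum_le_sum fun j hj => mul_le_mul_of_nonneg_left ?_ (hμ j)
        obtain ⟨hkj, hjN⟩ := mem_Ico.mp hj
        rw [← sq_abs]
        exact pow_le_pow_left₀ (abs_nonneg _)
          (abs_inner_le_abs_inner_add_sqrt_mul_sqrt hy hkj hjN.le) 2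
    _ ≤ (√(∑ j ∈ Ico k N, μ j * |⟪φ j, y j⟫| ^ 2) +
          √(∑ j ∈ Ico k N, μ j * (√(B j) * √s) ^ 2)) ^ 2 :=
        sum_mul_add_sq_le_sqrt_add_sqrt_sq _ (fun j _ => hμ j) _ _
    _ ≤ (√((Ico k N).sup' hkN μ) * √s + √(∑ j ∈ Ico k N, μ j * B j) * √s) ^ 2 := by
        simp_rw [mul_pow, Real.sq_sqrt (hB _), Real.sq_sqrt hs, ← mul_assoc, ← sum_mul,
          ← Real.sqrt_mul' _ hs]
        gcongr
    _ = _ := by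
        rw [← add_mul, mul_pow, Real.sq_sqrt hs]

end Deflation

noncomputable def matOpNorm {m n : ℕ} (A : Matrix (Fin m) (Fin n) ℝ) : ℝ :=
  ‖LinearMap.toContinuousLinearMap (Matrix.toEuclideanLin A)‖

theorem stmt5_general {d : ℕ} (hd : 0 < d) (k N : ℕ) (hkN : k < N)
    (φ : ℕ → EuclideanSpace ℝ (Fin d)) (hφ : ∀ j, ‖φ j‖ ≤ 1)
    (μ : ℕ → ℝ) (hμ : ∀ j, 0 ≤ μ j)
    (Φ : ℕ → Matrix (Fin d) (Fin d) ℝ)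
    (hΦk : Φ k = 1)
    (hΦ : ∀ n, k ≤ n →
      Φ (n + 1) = ((1 : Matrix (Fin d) (Fin d) ℝ) - Matrix.vecMulVec (WithLp.ofLp (φ n)) (WithLp.ofLp (φ n))) * Φ n)
    (S : Matrix (Fin d) (Fin d) ℝ)
    (hS : S = ∑ j ∈ Finset.Ico k N, μ j • Matrix.vecMulVec (WithLp.ofLp (φ j)) (WithLp.ofLp (φ j)))
    (hSh : S.IsHermitian)
    (denom : ℝ)
    (hden : denom = Real.sqrt ((Finset.Ico k N).sup' (Finset.nonempty_Ico.mpr hkN) μ)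
        + Real.sqrt (∑ j ∈ Finset.Ico k N, μ j *
            ∑ l ∈ Finset.Ico k j, (inner ℝ (φ j) (φ l) : ℝ) ^ 2)) :
    matOpNorm (Φ N) ^ 2 ≤ 1 - (⨅ a, hSh.eigenvalues a) / denom ^ 2 := by
  have : NeZero d := ⟨hd.ne'⟩
  refine ContinuousLinearMap.opNorm_sq_le_of_forall_norm_sq_le _ fun x => ?_
  set y : ℕ → EuclideanSpace ℝ (Fin d) := fun n => toEuclideanLin (Φ n) x
  have hy : ∀ n, k ≤ n → y (n + 1) = y n - ⟪φ n, y n⟫ • φ n := fun n hn => by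
    simp only [y, hΦ n hn, toLpLin_mul_same, LinearMap.comp_apply,
      toEuclideanLin_one_sub_vecMulVec_self_apply]
  have hyk : y k = x := by simp [y, hΦk]
  set s := ∑ j ∈ Ico k N, ⟪φ j, y j⟫ ^ 2
  have hs : 0 ≤ s := sum_nonneg fun j _ => sq_nonneg _
  have henergy : ‖y N‖ ^ 2 + s ≤ ‖x‖ ^ 2 := hyk ▸ norm_sq_add_sum_inner_sq_le hφ hy hkN.le
  have hquad : (⨅ a, hSh.eigenvalues a) * ‖x‖ ^ 2 ≤ denom ^ 2 * s := calc
    _ ≤ ⟪x, toEuclideanLin S x⟫ := hSh.iInf_eigenvalues_mul_norm_sq_le x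
    _ = ∑ j ∈ Ico k N, μ j * ⟪φ j, x⟫ ^ 2 := by
      simp only [hS, map_sum, _root_.map_smul, LinearMap.sum_apply, LinearMap.smul_apply,
        inner_sum, real_inner_smul_right, inner_toEuclideanLin_vecMulVec_self]
    _ ≤ denom ^ 2 * s := hden ▸ hyk ▸ sum_mul_inner_sq_le hμ hy (nonempty_Ico.mpr hkN)
  have hratio : (⨅ a, hSh.eigenvalues a) / denom ^ 2 * ‖x‖ ^ 2 ≤ s := by
    rw [div_mul_eq_mul_div]
    exact div_le_of_le_mul₀ (sq_nonneg denom) hs (hquad.trans_eq (mul_comm _ _))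
  change ‖y N‖ ^ 2 ≤ _
  linarith

/-- With Φ(N,k) = (I - φ_{N-1}φ_{N-1}ᵀ)⋯(I - φ_kφ_kᵀ), ‖φⱼ‖ ≤ 1,
weights μⱼ ≥ 0, S_{Nk} = ∑_{j=k}^{N-1} μⱼφⱼφⱼᵀ and B_{jk} = ∑_{l=k}^{j-1}(φⱼᵀφ_l)²,
‖Φ(N,k)‖² ≤ 1 - λ_min(S_{Nk}) / (√(max_{k≤j<N} μⱼ) + √(∑_j μⱼ B_{jk}))²,
provided the denominator is positive. -/
theorem stmt5 {d : ℕ} (hd : 0 < d) (k N : ℕ) (hkN : k < N)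
    (φ : ℕ → EuclideanSpace ℝ (Fin d)) (hφ : ∀ j, ‖φ j‖ ≤ 1)
    (μ : ℕ → ℝ) (hμ : ∀ j, 0 ≤ μ j)
    (Φ : ℕ → Matrix (Fin d) (Fin d) ℝ)
    (hΦk : Φ k = 1)
    (hΦ : ∀ n, k ≤ n →
      Φ (n + 1) = ((1 : Matrix (Fin d) (Fin d) ℝ) - Matrix.vecMulVec (WithLp.ofLp (φ n)) (WithLp.ofLp (φ n))) * Φ n)
    (S : Matrix (Fin d) (Fin d) ℝ)
    (hS : S = ∑ j ∈ Finset.Ico k N, μ j • Matrix.vecMulVec (WithLp.ofLp (φ j)) (WithLp.ofLp (φ j)))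
    (hSh : S.IsHermitian)
    (denom : ℝ)
    (hden : denom = Real.sqrt ((Finset.Ico k N).sup' (Finset.nonempty_Ico.mpr hkN) μ)
        + Real.sqrt (∑ j ∈ Finset.Ico k N, μ j *
            ∑ l ∈ Finset.Ico k j, (inner ℝ (φ j) (φ l) : ℝ) ^ 2))
    (hpos : 0 < denom) :
    matOpNorm (Φ N) ^ 2 ≤ 1 - (⨅ a, hSh.eigenvalues a) / denom ^ 2 :=
  stmt5_general hd k N hkN φ hφ μ hμ Φ hΦk hΦ S hS hSh denom hden
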